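/- arXiv:2409.18080 — 2 statements merged into one kernel-verified Lean document; each statement's English description precedes it below -/
import Mathlib

section
/- Let K = ℚ(√D) with D ≥ 2 squarefree and (β_j) the ordered sequence of indecomposables with v_jβ_j = β_{j-1} + β_{j+1}. For α = 4β_j: if v_j ≥ 5 then p_K(α) = 5; if v_j = 4 then p_K(α) = 6; if v_j = 3 then p_K(α) ≥ 8; and if v_j = 2 then p_K(α) ≥ 16. -/
/-!
Let `ℓ` be the linear functional, positive on totally positive elements, that takes the same
value at `β_{j-1}` and `β_{j+1}`. The relation `v_k β_k = β_{k-1} + β_{k+1}` with `v_k ≥ 2` makes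
`k ↦ ℓ(β_k)` convex, so among the indecomposables `β_j` has the least value `c`, its two
neighbours come next with value `v_j c / 2`, and all others have value at least `(v_j - 1) c`.
Refining a partition of `4 β_j` into indecomposables and comparing `ℓ`-values, for `v_j ≥ 4`
the refinement is `β_j + β_j + β_j + β_j`, or `β_{j-1} + β_{j+1}` when `v_j = 4`; the
coarsenings of these give the `5` resp. `6` partitions. For `v_j ≤ 3` it suffices to exhibit
`8` resp. `16` distinct partitions, since the number of partitions is finite (the parts have
bounded trace and hence bounded coordinates).
-/

noncomputable section

/-- `ω_D`: the standard generator of the ring of integers of `ℚ(√D)`. -/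
def omegaD (D : ℕ) : ℝ := if D % 4 = 1 then (1 + Real.sqrt D) / 2 else Real.sqrt D

/-- The Galois conjugate of `ω_D`. -/
def omegaD' (D : ℕ) : ℝ := if D % 4 = 1 then (1 - Real.sqrt D) / 2 else -Real.sqrt D

/-- Elements of `O_K` in coordinates: `(x, y)` represents `x + y·ω_D`. -/
abbrev OK : Type := ℤ × ℤ

/-- First real embedding. -/
def emb1 (D : ℕ) (a : OK) : ℝ := a.1 + a.2 * omegaD D

/-- Second real embedding (Galois conjugate). -/
def emb2 (D : ℕ) (a : OK) : ℝ := a.1 + a.2 * omegaD' D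

/-- Galois conjugation on `O_K`. -/
def conjOK (D : ℕ) (a : OK) : OK := (a.1 + (if D % 4 = 1 then (1 : ℤ) else 0) * a.2, -a.2)

/-- Total positivity. -/
def TotPos (D : ℕ) (a : OK) : Prop := 0 < emb1 D a ∧ 0 < emb2 D a

/-- The field norm. -/
def Nm (D : ℕ) (a : OK) : ℝ := emb1 D a * emb2 D a

/-- Indecomposability: totally positive and not a sum of two totally positive elements. -/
def Indec (D : ℕ) (a : OK) : Prop :=
  TotPos D a ∧ ¬ ∃ b c : OK, TotPos D b ∧ TotPos D c ∧ a = b + c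

/-- Number of partitions of `α` into indecomposable parts (`p_K(α|I)`). -/
def pKI (D : ℕ) (α : OK) : ℕ :=
  Set.ncard {s : Multiset OK | (∀ x ∈ s, Indec D x) ∧ s.sum = α}

/-- Number of partitions of `α` into totally positive parts (`p_K(α)`). -/
def pK (D : ℕ) (α : OK) : ℕ :=
  Set.ncard {s : Multiset OK | (∀ x ∈ s, TotPos D x) ∧ s.sum = α}

/-- Discriminant of `ℚ(√D)`. -/
def disc (D : ℕ) : ℕ := if D % 4 = 1 then D else 4 * D

/-- The ordered two-sided sequence of indecomposables together with
the coefficients `v j ≥ 2` from the Hejda–Kala relation `v_j β_j = β_{j-1} + β_{j+1}`. -/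
structure BetaSeq (D : ℕ) (β : ℤ → OK) (v : ℤ → ℤ) : Prop where
  indec : ∀ j, Indec D (β j)
  surj : ∀ a : OK, Indec D a → ∃ j, β j = a
  mono : StrictMono fun j => emb1 D (β j)
  zero : β 0 = (1, 0)
  conj_eq : ∀ j, β (-j) = conjOK D (β j)
  v_two_le : ∀ j, 2 ≤ v j
  v_symm : ∀ j, v (-j) = v j
  rel : ∀ j, v j • β j = β (j - 1) + β (j + 1)

/-- The continued fraction data of `ω_D = [⌈u₀/2⌉, \overline{u₁, …, u_s}]` (with `u_s = u_0`),
with tails `γ_0 = ω_D`, `γ_i = [u_i, u_{i+1}, …]` for `i ≥ 1`. -/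
structure CFData (D : ℕ) (u : ℕ → ℕ) (γ : ℕ → ℝ) : Prop where
  gamma_zero : γ 0 = omegaD D
  u_zero : (u 0 : ℤ) = 2 * ⌊omegaD D⌋ - (if D % 4 = 1 then 1 else 0)
  head : omegaD D = (⌊omegaD D⌋ : ℝ) + 1 / γ 1
  step : ∀ i, 1 ≤ i → γ i = u i + 1 / γ (i + 1)
  one_lt : ∀ i, 1 ≤ i → 1 < γ i
  floor_eq : ∀ i, 1 ≤ i → (u i : ℤ) = ⌊γ i⌋
  period : ∃ s, 1 ≤ s ∧ u s = u 0 ∧ ∀ i, 1 ≤ i → u (i + s) = u i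

/-- The convergents `α_i = p_i + q_i ξ_D`, indexed by `i ≥ -1`. -/
structure ConvData (D : ℕ) (u : ℕ → ℕ) (a : ℤ → OK) : Prop where
  neg_one : a (-1) = (1, 0)
  zero : a 0 = (⌊omegaD D⌋, 0) + (if D % 4 = 1 then ((-1 : ℤ), (1 : ℤ)) else (0, 1))
  recur : ∀ i : ℤ, -1 ≤ i → a (i + 2) = (u (i + 2).toNat : ℤ) • a (i + 1) + a i

/-- Semiconvergents `α_{i,r} = α_i + r·α_{i+1}`. -/
def semiconv (a : ℤ → OK) (i r : ℤ) : OK := a i + r • a (i + 1)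

def emb1Hom (D : ℕ) : OK →+ ℝ :=
  AddMonoidHom.mk' (emb1 D) fun a b => by
    simp only [emb1, Prod.fst_add, Prod.snd_add]; push_cast; ring

def emb2Hom (D : ℕ) : OK →+ ℝ :=
  AddMonoidHom.mk' (emb2 D) fun a b => by
    simp only [emb2, Prod.fst_add, Prod.snd_add]; push_cast; ring

@[simp] lemma emb1Hom_apply (D : ℕ) (a : OK) : emb1Hom D a = emb1 D a := rfl

@[simp] lemma emb2Hom_apply (D : ℕ) (a : OK) : emb2Hom D a = emb2 D a := rfl

lemma emb1_add (D : ℕ) (a b : OK) : emb1 D (a + b) = emb1 D a + emb1 D b :=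
  (emb1Hom D).map_add a b

lemma emb2_add (D : ℕ) (a b : OK) : emb2 D (a + b) = emb2 D a + emb2 D b :=
  (emb2Hom D).map_add a b

lemma emb1_zsmul (D : ℕ) (n : ℤ) (a : OK) : emb1 D (n • a) = n * emb1 D a := by
  simpa using (emb1Hom D).map_zsmul n a

lemma emb2_zsmul (D : ℕ) (n : ℤ) (a : OK) : emb2 D (n • a) = n * emb2 D a := by
  simpa using (emb2Hom D).map_zsmul n a

lemma emb2_eq_emb1_conjOK (D : ℕ) (a : OK) : emb2 D a = emb1 D (conjOK D a) := by
  unfold emb1 emb2 conjOK omegaD omegaD'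
  split_ifs <;> push_cast <;> ring

section TotPos
variable {D : ℕ}

lemma TotPos.zsmul_add_zsmul {a b : OK} (ha : TotPos D a) (hb : TotPos D b) {m n : ℤ}
    (hm : 0 ≤ m) (hn : 0 ≤ n) (hmn : 0 < m + n) : TotPos D (m • a + n • b) := by
  have key : ∀ {A B : ℝ}, 0 < A → 0 < B → 0 < (m : ℝ) * A + n * B := fun hA hB => by
    rcases (show 0 < m ∨ 0 < n by omega) with h | h
    · exact add_pos_of_pos_of_nonneg (mul_pos (by exact_mod_cast h) hA)
        (mul_nonneg (by exact_mod_cast hn) hB.le)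
    · exact add_pos_of_nonneg_of_pos (mul_nonneg (by exact_mod_cast hm) hA.le)
        (mul_pos (by exact_mod_cast h) hB)
  constructor
  · rw [emb1_add, emb1_zsmul, emb1_zsmul]; exact key ha.1 hb.1
  · rw [emb2_add, emb2_zsmul, emb2_zsmul]; exact key ha.2 hb.2

lemma TotPos.zsmul {a : OK} (ha : TotPos D a) {n : ℤ} (hn : 0 < n) : TotPos D (n • a) := by
  simpa using ha.zsmul_add_zsmul ha hn.le le_rfl (by omega)

lemma not_indec_zsmul {a : OK} (ha : TotPos D a) {n : ℤ} (hn : 2 ≤ n) :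
    ¬ Indec D (n • a) := by
  rintro ⟨-, hdec⟩
  refine hdec ⟨a, (n - 1) • a, ha, ha.zsmul (by omega), ?_⟩
  rw [sub_smul, one_smul, add_sub_cancel]

end TotPos

section Trace
variable {D : ℕ}

def trace (D : ℕ) : OK →+ ℤ :=
  AddMonoidHom.mk' (fun a => 2 * a.1 + (if D % 4 = 1 then 1 else 0) * a.2) fun a b => by
    simp only [Prod.fst_add, Prod.snd_add]; ring

lemma trace_apply (a : OK) : trace D a = 2 * a.1 + (if D % 4 = 1 then 1 else 0) * a.2 := rfl

lemma cast_trace (a : OK) : (trace D a : ℝ) = emb1 D a + emb2 D a := by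
  rw [trace_apply]; unfold emb1 emb2 omegaD omegaD'
  split_ifs <;> push_cast <;> ring

lemma TotPos.trace_pos {a : OK} (ha : TotPos D a) : 0 < trace D a := by
  have : (0 : ℝ) < trace D a := by rw [cast_trace]; exact add_pos ha.1 ha.2
  exact_mod_cast this

lemma TotPos.abs_snd_lt_trace (hD : 1 ≤ D) {a : OK} (ha : TotPos D a) : |a.2| < trace D a := by
  have hsqrt : (1 : ℝ) ≤ Real.sqrt D := Real.one_le_sqrt.2 (by exact_mod_cast hD)
  have hgap : 1 ≤ omegaD D - omegaD' D := by
    unfold omegaD omegaD'; split_ifs <;> linarith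
  have hdiff : emb1 D a - emb2 D a = a.2 * (omegaD D - omegaD' D) := by
    unfold emb1 emb2; ring
  have : (|a.2| : ℝ) < trace D a := by
    rw [cast_trace, abs_lt]
    constructor <;> nlinarith [ha.1, ha.2]
  exact_mod_cast this

lemma TotPos.abs_fst_le_trace (hD : 1 ≤ D) {a : OK} (ha : TotPos D a) : |a.1| ≤ trace D a := by
  have h2 := ha.abs_snd_lt_trace hD
  rw [trace_apply] at h2 ⊢
  rw [abs_lt] at h2; rw [abs_le]
  split_ifs at h2 ⊢ <;> constructor <;> omega

lemma TotPos.exists_indec_sum {a : OK} (ha : TotPos D a) :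
    ∃ b : Multiset OK, b ≠ 0 ∧ (∀ x ∈ b, Indec D x) ∧ b.sum = a := by
  induction hn : (trace D a).toNat using Nat.strong_induction_on generalizing a with
  | _ n ih =>
    by_cases hind : Indec D a
    · exact ⟨{a}, by simp, by simpa using hind, by simp⟩
    obtain ⟨x, y, hx, hy, rfl⟩ : ∃ x y : OK, TotPos D x ∧ TotPos D y ∧ a = x + y := by
      by_contra h
      exact hind ⟨ha, h⟩
    have htr := (trace D).map_add x y
    have := hx.trace_pos; have := hy.trace_pos
    obtain ⟨bx, hbx, hbx', rfl⟩ := ih _ (by omega) hx rfl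
    obtain ⟨by', -, hby', rfl⟩ := ih _ (by omega) hy rfl
    refine ⟨bx + by', by simp [hbx], ?_, Multiset.sum_add _ _⟩
    simpa only [Multiset.mem_add, or_imp, forall_and] using ⟨hbx', hby'⟩

lemma exists_indec_refinement {s : Multiset OK} (hs : ∀ x ∈ s, TotPos D x) :
    ∃ t : Multiset (Multiset OK), (∀ b ∈ t, b ≠ 0 ∧ ∀ x ∈ b, Indec D x) ∧
      t.map Multiset.sum = s := by
  induction s using Multiset.induction with
  | empty => exact ⟨0, by simp, rfl⟩
  | cons a s ih =>
    obtain ⟨t, ht, rfl⟩ := ih fun x hx => hs x (Multiset.mem_cons_of_mem hx)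
    obtain ⟨b, hb0, hb, rfl⟩ := (hs _ (Multiset.mem_cons_self _ _)).exists_indec_sum
    exact ⟨b ::ₘ t, Multiset.forall_mem_cons.2 ⟨⟨hb0, hb⟩, ht⟩, by simp⟩

end Trace

def tpPartitions (D : ℕ) (α : OK) : Set (Multiset OK) :=
  {s | (∀ x ∈ s, TotPos D x) ∧ s.sum = α}

lemma pK_eq_ncard (D : ℕ) (α : OK) : pK D α = (tpPartitions D α).ncard := rfl

lemma tpPartitions_finite {D : ℕ} (hD : 1 ≤ D) (α : OK) : (tpPartitions D α).Finite := by
  classical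
  set N := trace D α
  set box : Finset OK := Finset.Icc (-N, -N) (N, N)
  refine (Set.finite_Iic (N.toNat • box.val)).subset fun s ⟨hs, hsum⟩ => ?_
  have htr : (s.map (trace D)).sum = N := by rw [← map_multiset_sum, hsum]
  have hpos : ∀ n ∈ s.map (trace D), 1 ≤ n :=
    Multiset.forall_mem_map_iff.2 fun x hx => (hs x hx).trace_pos
  have hcard : (Multiset.card s : ℤ) ≤ N := by
    simpa [htr] using Multiset.card_nsmul_le_sum hpos
  have hbox : ∀ x ∈ s, x ∈ box := fun x hx => by
    have hle : trace D x ≤ N :=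
      htr ▸ Multiset.single_le_sum (fun n hn => by linarith [hpos n hn]) _
        (Multiset.mem_map_of_mem _ hx)
    have h1 := abs_le.1 ((hs x hx).abs_fst_le_trace hD)
    have h2 := abs_lt.1 ((hs x hx).abs_snd_lt_trace hD)
    simp only [box, Finset.mem_Icc, Prod.le_def]
    omega
  refine Multiset.le_iff_count.2 fun x => ?_
  by_cases hx : x ∈ s
  · rw [Multiset.count_nsmul, Multiset.count_eq_one_of_mem box.nodup (hbox x hx), mul_one]
    exact (Multiset.count_le_card x s).trans (by omega)
  · simp [Multiset.count_eq_zero_of_notMem hx]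

lemma le_of_discrete_convex {f : ℤ → ℝ} (hf : ∀ k, 2 * f k ≤ f (k - 1) + f (k + 1))
    (l k : ℤ) :
    f l + (k - l) * (f (l + 1) - f l) ≤ f k := by
  have hmono : Monotone fun k => f (k + 1) - f k := monotone_int_of_le_succ fun k => by
    have := hf (k + 1); simp only [add_sub_cancel_right] at this; linarith
  induction k using Int.inductionOn' (b := l) with
  | zero => simp
  | succ k hk ih =>
    have := hmono hk; push_cast; simp only at this; linarith
  | pred k hk ih =>
    have := hmono (show k - 1 ≤ l by omega); push_cast; simp only [sub_add_cancel] at this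
    linarith

section Sail
variable {D : ℕ} {β : ℤ → OK} {v : ℤ → ℤ}

lemma BetaSeq.emb2_eq (hβ : BetaSeq D β v) (k : ℤ) : emb2 D (β k) = emb1 D (β (-k)) := by
  rw [hβ.conj_eq, emb2_eq_emb1_conjOK]

lemma BetaSeq.emb2_lt (hβ : BetaSeq D β v) {k l : ℤ} (h : k < l) :
    emb2 D (β l) < emb2 D (β k) := by
  rw [hβ.emb2_eq, hβ.emb2_eq]; exact hβ.mono (neg_lt_neg h)

lemma BetaSeq.injective (hβ : BetaSeq D β v) : Function.Injective β :=
  fun _ _ h => hβ.mono.injective (congrArg (emb1 D) h)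

/-- The supporting line of the sail through `β (j - 1)` and `β (j + 1)`, as a functional. -/
def sailFunctional (D : ℕ) (β : ℤ → OK) (j : ℤ) : OK →+ ℝ :=
  (emb2 D (β (j - 1)) - emb2 D (β (j + 1))) • emb1Hom D +
    (emb1 D (β (j + 1)) - emb1 D (β (j - 1))) • emb2Hom D

lemma sailFunctional_apply (j : ℤ) (a : OK) : sailFunctional D β j a =
    (emb2 D (β (j - 1)) - emb2 D (β (j + 1))) * emb1 D a +
      (emb1 D (β (j + 1)) - emb1 D (β (j - 1))) * emb2 D a := by
  simp [sailFunctional]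

lemma sailFunctional_pred_eq_succ (j : ℤ) :
    sailFunctional D β j (β (j - 1)) = sailFunctional D β j (β (j + 1)) := by
  simp only [sailFunctional_apply]; ring

lemma BetaSeq.sailFunctional_pos (hβ : BetaSeq D β v) (j : ℤ) {a : OK} (ha : TotPos D a) :
    0 < sailFunctional D β j a := by
  rw [sailFunctional_apply]
  have h1 := sub_pos.2 (hβ.emb2_lt (show j - 1 < j + 1 by omega))
  have h2 := sub_pos.2 (hβ.mono (show j - 1 < j + 1 by omega))
  exact add_pos (mul_pos h1 ha.1) (mul_pos h2 ha.2)

lemma BetaSeq.sailFunctional_rel (hβ : BetaSeq D β v) (j k : ℤ) :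
    v k * sailFunctional D β j (β k) =
      sailFunctional D β j (β (k - 1)) + sailFunctional D β j (β (k + 1)) := by
  rw [← map_add, ← hβ.rel, map_zsmul, zsmul_eq_mul]

lemma BetaSeq.two_mul_sailFunctional_le (hβ : BetaSeq D β v) (j k : ℤ) :
    2 * sailFunctional D β j (β k) ≤
      sailFunctional D β j (β (k - 1)) + sailFunctional D β j (β (k + 1)) := by
  rw [← hβ.sailFunctional_rel]
  have := hβ.sailFunctional_pos j (hβ.indec k).1
  have : (2 : ℝ) ≤ v k := by exact_mod_cast hβ.v_two_le k
  nlinarith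

lemma BetaSeq.sailFunctional_center (hβ : BetaSeq D β v) (j : ℤ) :
    v j * sailFunctional D β j (β j) = 2 * sailFunctional D β j (β (j - 1)) := by
  rw [hβ.sailFunctional_rel, ← sailFunctional_pred_eq_succ]; ring

lemma BetaSeq.sailFunctional_ge (hβ : BetaSeq D β v) (j k : ℤ) (hk : k ≠ j) :
    sailFunctional D β j (β (j - 1)) ≤ sailFunctional D β j (β k) ∧
      (k = j - 1 ∨ k = j + 1 ∨ 2 * sailFunctional D β j (β (j - 1)) -
        sailFunctional D β j (β j) ≤ sailFunctional D β j (β k)) := by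
  set f := fun k => sailFunctional D β j (β k)
  change f (j - 1) ≤ f k ∧ (k = j - 1 ∨ k = j + 1 ∨ 2 * f (j - 1) - f j ≤ f k)
  have hconv := le_of_discrete_convex (f := f) (hβ.two_mul_sailFunctional_le j)
  have hsymm : f (j - 1) = f (j + 1) := sailFunctional_pred_eq_succ j
  have hstep : f j ≤ f (j - 1) := by
    have := hβ.sailFunctional_center j
    have := hβ.sailFunctional_pos j (hβ.indec j).1
    have : (2 : ℝ) ≤ v j := by exact_mod_cast hβ.v_two_le j
    change _ = 2 * f (j - 1) at *
    nlinarith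
  have hsucc := hconv j k
  have hpred := hconv (j - 1) k
  simp only [sub_add_cancel] at hpred
  push_cast at hpred
  rcases lt_or_gt_of_ne hk with h | h
  · have h' : (k : ℝ) ≤ j - 1 := by exact_mod_cast (show k ≤ j - 1 by omega)
    refine ⟨by nlinarith, ?_⟩
    rcases eq_or_lt_of_le (show k ≤ j - 1 by omega) with h'' | h''
    · exact Or.inl h''
    · have : (k : ℝ) ≤ j - 2 := by exact_mod_cast (show k ≤ j - 2 by omega)
      exact Or.inr (Or.inr (by nlinarith))
  · have h' : (j : ℝ) + 1 ≤ k := by exact_mod_cast (show j + 1 ≤ k by omega)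
    refine ⟨by nlinarith, ?_⟩
    rcases eq_or_lt_of_le (show j + 1 ≤ k by omega) with h'' | h''
    · exact Or.inr (Or.inl h''.symm)
    · have : (j : ℝ) + 2 ≤ k := by exact_mod_cast (show j + 2 ≤ k by omega)
      exact Or.inr (Or.inr (by nlinarith))

end Sail

lemma pair_eq_pair_of_add_eq {M : Type*} [AddCancelCommMonoid M] {a b x y : M} (hab : a ≠ b)
    (hx : x = a ∨ x = b) (hy : y = a ∨ y = b) (h : x + y = a + b) :
    ({x, y} : Multiset M) = {a, b} := by
  rcases hx with rfl | rfl <;> rcases hy with rfl | rfl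
  · exact absurd (add_left_cancel h) hab
  · rfl
  · exact Multiset.pair_comm _ _
  · exact absurd (add_right_cancel h).symm hab

section Classification
variable {D : ℕ} {β : ℤ → OK} {v : ℤ → ℤ}

lemma BetaSeq.sailFunctional_ge_of_indec (hβ : BetaSeq D β v) (j : ℤ) {x : OK}
    (hx : Indec D x) (hxj : x ≠ β j) :
    sailFunctional D β j (β (j - 1)) ≤ sailFunctional D β j x ∧
      (x = β (j - 1) ∨ x = β (j + 1) ∨ 2 * sailFunctional D β j (β (j - 1)) -
        sailFunctional D β j (β j) ≤ sailFunctional D β j x) := by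
  obtain ⟨k, rfl⟩ := hβ.surj x hx
  obtain ⟨h, h' | h' | h'⟩ := hβ.sailFunctional_ge j k (by rintro rfl; exact hxj rfl)
  exacts [⟨h, Or.inl (congrArg β h')⟩, ⟨h, Or.inr (Or.inl (congrArg β h'))⟩,
    ⟨h, Or.inr (Or.inr h')⟩]

lemma eq_replicate_of_forall_eq {D : ℕ} {y : OK} (hy : TotPos D y) {m : Multiset OK}
    (hm : ∀ x ∈ m, x = y) {n : ℕ} (hsum : m.sum = (n : ℤ) • y) :
    m = Multiset.replicate n y := by
  have hy0 : y ≠ 0 := by rintro rfl; simp [TotPos, emb1] at hy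
  rw [Multiset.eq_replicate_card.2 hm, Multiset.sum_replicate, ← natCast_zsmul] at hsum
  rw [Multiset.eq_replicate_card.2 hm, Nat.cast_injective (smul_left_injective ℤ hy0 hsum)]

lemma Indec.eq_of_eq_zsmul {D : ℕ} {x y : OK} (hx : Indec D x) (hy : TotPos D y) {n : ℤ}
    (h : x = n • y) : x = y := by
  subst h
  obtain hn | rfl | hn : n ≤ 0 ∨ n = 1 ∨ 2 ≤ n := by omega
  · have := hx.1.1
    rw [emb1_zsmul] at this
    nlinarith [hy.1, (Int.cast_nonpos (R := ℝ)).2 hn]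
  · exact one_smul _ _
  · exact absurd hx (not_indec_zsmul hy hn)

lemma BetaSeq.pair_of_add_add_sum_eq (hβ : BetaSeq D β v) {j : ℤ} (hv : 4 ≤ v j) {x y : OK}
    (hx : Indec D x) (hxj : x ≠ β j) (hy : Indec D y) (hyj : y ≠ β j) {m : Multiset OK}
    (hm : ∀ z ∈ m, TotPos D z) (hsum : x + y + m.sum = (4 : ℤ) • β j) :
    v j = 4 ∧ m = 0 ∧ ({x, y} : Multiset OK) = {β (j - 1), β (j + 1)} := by
  set ℓ := sailFunctional D β j with hℓ
  have hc : 0 < ℓ (β j) := hβ.sailFunctional_pos j (hβ.indec j).1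
  have hbc : v j * ℓ (β j) = 2 * ℓ (β (j - 1)) := hβ.sailFunctional_center j
  have hv' : (4 : ℝ) ≤ v j := by exact_mod_cast hv
  have hxb := hβ.sailFunctional_ge_of_indec j hx hxj
  have hyb := hβ.sailFunctional_ge_of_indec j hy hyj
  rw [← hℓ] at hxb hyb
  have hℓsum : ℓ x + ℓ y + (m.map ℓ).sum = 4 * ℓ (β j) := by
    rw [← map_multiset_sum, ← map_add, ← map_add, hsum, map_zsmul]; norm_num
  have hpos : ∀ z ∈ m.map ℓ, 0 ≤ z :=
    Multiset.forall_mem_map_iff.2 fun z hz => (hβ.sailFunctional_pos j (hm z hz)).le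
  have hm_nonneg : 0 ≤ (m.map ℓ).sum := Multiset.sum_nonneg hpos
  have hv4 : v j = 4 := by
    have : (v j : ℝ) ≤ 4 := by nlinarith
    exact_mod_cast le_antisymm this hv'
  rw [hv4, Int.cast_ofNat] at hbc
  have hx_eq : ℓ x = ℓ (β (j - 1)) := by linarith [hyb.1]
  have hy_eq : ℓ y = ℓ (β (j - 1)) := by linarith [hxb.1]
  have hm0 : m = 0 := Multiset.eq_zero_of_forall_notMem fun z hz => by
    linarith [hβ.sailFunctional_pos j (hm z hz),
      Multiset.single_le_sum hpos _ (Multiset.mem_map_of_mem ℓ hz)]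
  have hnear : ∀ z, (z = β (j - 1) ∨ z = β (j + 1) ∨
      2 * ℓ (β (j - 1)) - ℓ (β j) ≤ ℓ z) →
      ℓ z = ℓ (β (j - 1)) → z = β (j - 1) ∨ z = β (j + 1) := by
    rintro z (h | h | h) hz
    exacts [Or.inl h, Or.inr h, by linarith]
  subst hm0
  refine ⟨hv4, rfl, pair_eq_pair_of_add_eq ?_ (hnear x hxb.2 hx_eq) (hnear y hyb.2 hy_eq) ?_⟩
  · exact hβ.injective.ne (by omega)
  · simpa [← hβ.rel, hv4] using hsum

theorem BetaSeq.indec_partition_of_four_le (hβ : BetaSeq D β v) {j : ℤ} (hv : 4 ≤ v j)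
    {m : Multiset OK} (hm : ∀ x ∈ m, Indec D x) (hsum : m.sum = (4 : ℤ) • β j) :
    m = Multiset.replicate 4 (β j) ∨ (v j = 4 ∧ m = {β (j - 1), β (j + 1)}) := by
  by_cases hall : ∀ x ∈ m, x = β j
  · exact Or.inl (eq_replicate_of_forall_eq (hβ.indec j).1 hall hsum)
  push Not at hall
  obtain ⟨x, hx, hxj⟩ := hall
  obtain ⟨m₁, rfl⟩ := Multiset.exists_cons_of_mem hx
  by_cases hall₁ : ∀ y ∈ m₁, y = β j
  · obtain ⟨a, rfl⟩ : ∃ a, m₁ = Multiset.replicate a (β j) :=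
      ⟨_, Multiset.eq_replicate_card.2 hall₁⟩
    rw [Multiset.sum_cons, Multiset.sum_replicate, ← natCast_zsmul, ← eq_sub_iff_add_eq,
      ← sub_smul] at hsum
    exact absurd ((hm x hx).eq_of_eq_zsmul (hβ.indec j).1 hsum) hxj
  push Not at hall₁
  obtain ⟨y, hy, hyj⟩ := hall₁
  obtain ⟨m₂, rfl⟩ := Multiset.exists_cons_of_mem hy
  rw [Multiset.sum_cons, Multiset.sum_cons, ← add_assoc] at hsum
  obtain ⟨hv4, rfl, hpair⟩ := hβ.pair_of_add_add_sum_eq hv (hm x hx) hxj (hm y (by simp)) hyj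
    (fun z hz => (hm z (by simp [hz])).1) hsum
  exact Or.inr ⟨hv4, hpair⟩

end Classification

section Coarsening
variable {α : Type*}

lemma Multiset.card_le_card_join {t : Multiset (Multiset α)} (ht : ∀ b ∈ t, b ≠ 0) :
    Multiset.card t ≤ Multiset.card t.join := by
  simpa [Multiset.card_join] using Multiset.card_nsmul_le_sum
    (Multiset.forall_mem_map_iff.2 fun b hb => Multiset.card_pos.2 (ht b hb) :
      ∀ n ∈ t.map Multiset.card, 1 ≤ n)

lemma Multiset.map_sum_eq_join_of_card_join_le [AddCommMonoid α] {t : Multiset (Multiset α)}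
    (ht : ∀ b ∈ t, b ≠ 0) (h : Multiset.card t.join ≤ Multiset.card t) :
    t.map Multiset.sum = t.join := by
  induction t using Multiset.induction with
  | empty => rfl
  | cons b t ih =>
    have hb := Multiset.card_pos.2 (ht b (Multiset.mem_cons_self _ _))
    have ht' := fun c hc => ht c (Multiset.mem_cons_of_mem hc)
    have := Multiset.card_le_card_join ht'
    simp only [Multiset.join_cons, Multiset.card_add, Multiset.card_cons] at h
    obtain ⟨x, rfl⟩ := Multiset.card_eq_one.1 (show Multiset.card b = 1 by omega)
    simp [ih ht' (by omega)]

lemma Multiset.map_sum_eq_map_card_nsmul [AddCommMonoid α] {t : Multiset (Multiset α)} {y : α}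
    (h : ∀ x ∈ t.join, x = y) : t.map Multiset.sum = (t.map Multiset.card).map (· • y) := by
  rw [Multiset.map_map]
  refine Multiset.map_congr rfl fun b hb => ?_
  rw [Multiset.eq_replicate_card.2 fun x hx => h x (Multiset.mem_join.2 ⟨b, hb, hx⟩)]
  simp

end Coarsening

section Partitions
variable {D : ℕ} {β : ℤ → OK} {v : ℤ → ℤ}

theorem BetaSeq.tpPartition_of_four_le (hβ : BetaSeq D β v) {j : ℤ} (hv : 4 ≤ v j)
    {s : Multiset OK} (hs : s ∈ tpPartitions D ((4 : ℤ) • β j)) :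
    (∃ tn : Multiset ℕ, (∀ n ∈ tn, 0 < n) ∧ tn.sum = 4 ∧ s = tn.map (· • β j)) ∨
      (v j = 4 ∧ s = {β (j - 1), β (j + 1)}) := by
  obtain ⟨t, ht, rfl⟩ := exists_indec_refinement hs.1
  have hne : ∀ b ∈ t, b ≠ 0 := fun b hb => (ht b hb).1
  have hindec : ∀ x ∈ t.join, Indec D x := fun x hx => by
    obtain ⟨b, hb, hxb⟩ := Multiset.mem_join.1 hx
    exact (ht b hb).2 x hxb
  rcases hβ.indec_partition_of_four_le hv hindec (Multiset.sum_join.trans hs.2)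
    with hrep | ⟨hv4, hpair⟩
  · refine Or.inl ⟨t.map Multiset.card, Multiset.forall_mem_map_iff.2 fun b hb =>
      Multiset.card_pos.2 (hne b hb), ?_, Multiset.map_sum_eq_map_card_nsmul fun x hx => ?_⟩
    · rw [← Multiset.card_join, hrep, Multiset.card_replicate]
    · exact Multiset.eq_of_mem_replicate (hrep ▸ hx)
  · have hcard := Multiset.card_le_card_join hne
    rw [hpair, Multiset.card_pair] at hcard
    obtain h2 | h1 | h0 : Multiset.card t = 2 ∨ Multiset.card t = 1 ∨ t = 0 := by
      rw [← Multiset.card_eq_zero]; omega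
    · exact Or.inr ⟨hv4, (Multiset.map_sum_eq_join_of_card_join_le hne
        (by rw [hpair, h2, Multiset.card_pair])).trans hpair⟩
    · obtain ⟨b, rfl⟩ := Multiset.card_eq_one.1 h1
      refine Or.inl ⟨{4}, by simp, rfl, ?_⟩
      have := hs.2
      simp only [Multiset.map_singleton, Multiset.sum_singleton] at this ⊢
      rw [this, ← natCast_zsmul]; rfl
    · simp [h0] at hpair

end Partitions

section Coordinates
variable {D : ℕ} {β : ℤ → OK} {v : ℤ → ℤ}

def coordHom (β : ℤ → OK) (j : ℤ) : ℤ × ℤ →+ OK :=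
  (zmultiplesHom OK (β (j - 1))).coprod (zmultiplesHom OK (β j))

lemma coordHom_apply (j : ℤ) (p : ℤ × ℤ) :
    coordHom β j p = p.1 • β (j - 1) + p.2 • β j := by
  simp [coordHom]

lemma BetaSeq.coordHom_injective (hβ : BetaSeq D β v) (j : ℤ) :
    Function.Injective (coordHom β j) := by
  refine (injective_iff_map_eq_zero _).2 fun ⟨m, n⟩ h => ?_
  rw [coordHom_apply] at h
  have h1 := congrArg (emb1Hom D) h
  have h2 := congrArg (emb2Hom D) h
  rw [map_add, map_zsmul, map_zsmul, map_zero, zsmul_eq_mul, zsmul_eq_mul, emb1Hom_apply,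
    emb1Hom_apply] at h1
  rw [map_add, map_zsmul, map_zsmul, map_zero, zsmul_eq_mul, zsmul_eq_mul, emb2Hom_apply,
    emb2Hom_apply] at h2
  have hB1 := (hβ.indec j).1.1
  have hB2 := (hβ.indec j).1.2
  have hlt1 := hβ.mono (show j - 1 < j by omega)
  have hlt2 := hβ.emb2_lt (show j - 1 < j by omega)
  have hdet : emb1 D (β (j - 1)) * emb2 D (β j) < emb2 D (β (j - 1)) * emb1 D (β j) :=
    mul_lt_mul'' hlt1 hlt2 (hβ.indec (j - 1)).1.1.le hB2.le |>.trans_eq (mul_comm _ _)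
  have hm : (m : ℝ) = 0 := by
    have : (m : ℝ) * (emb2 D (β (j - 1)) * emb1 D (β j) - emb1 D (β (j - 1)) * emb2 D (β j)) =
        0 := by
      linear_combination emb1 D (β j) * h2 - emb2 D (β j) * h1
    exact (mul_eq_zero.1 this).resolve_right (sub_pos.2 hdet).ne'
  have hn : (n : ℝ) = 0 := by
    rw [hm, zero_mul, zero_add] at h1
    exact (mul_eq_zero.1 h1).resolve_right hB1.ne'
  simp only [Prod.mk_eq_zero]
  exact ⟨by exact_mod_cast hm, by exact_mod_cast hn⟩

-- For `p = (m, n)` with `m < 0`: `m β_{j-1} + n β_j = (-m) β_{j+1} + (n + m v_j) β_j`.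
def PosCoord (V : ℤ) (p : ℤ × ℤ) : Prop :=
  (0 ≤ p.1 ∧ 0 ≤ p.2 ∧ 0 < p.1 + p.2) ∨ (p.1 < 0 ∧ -p.1 * V ≤ p.2)

instance (V : ℤ) : DecidablePred (PosCoord V) := fun _ => inferInstanceAs (Decidable (_ ∨ _))

lemma BetaSeq.totPos_coordHom (hβ : BetaSeq D β v) (j : ℤ) {p : ℤ × ℤ}
    (hp : PosCoord (v j) p) : TotPos D (coordHom β j p) := by
  rw [coordHom_apply]
  rcases hp with ⟨h1, h2, h12⟩ | ⟨h1, h2⟩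
  · exact (hβ.indec _).1.zsmul_add_zsmul (hβ.indec _).1 h1 h2 h12
  · have : p.1 • β (j - 1) + p.2 • β j =
        (-p.1) • β (j + 1) + (p.2 + p.1 * v j) • β j := by
      rw [add_smul, mul_smul, hβ.rel, smul_add]
      module
    rw [this]
    exact (hβ.indec _).1.zsmul_add_zsmul (hβ.indec _).1 (by omega) (by linarith) (by nlinarith)

end Coordinates

def smallPartitions : Finset (Multiset ℕ) :=
  {0, {1}, {2}, {1, 1}, {3}, {2, 1}, {1, 1, 1}, {4}, {3, 1}, {2, 2}, {2, 1, 1}, {1, 1, 1, 1}}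

lemma mem_smallPartitions {tn : Multiset ℕ} (hpos : ∀ n ∈ tn, 0 < n) (hsum : tn.sum ≤ 4) :
    tn ∈ smallPartitions := by
  induction tn using Multiset.induction with
  | empty => decide
  | cons a tn ih =>
    have hclosed : ∀ u ∈ smallPartitions, ∀ a ∈ Finset.Icc 1 4, a + u.sum ≤ 4 →
        a ::ₘ u ∈ smallPartitions := by decide
    rw [Multiset.sum_cons] at hsum
    have ha := hpos a (Multiset.mem_cons_self _ _)
    exact hclosed tn (ih (fun n hn => hpos n (Multiset.mem_cons_of_mem hn)) (by omega)) a
      (Finset.mem_Icc.2 ⟨ha, by omega⟩) hsum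

/-! A multiset of pairs `(m, n)` below encodes the partition of `4 β_j` into the parts
`m β_{j-1} + n β_j` (see `coordHom`); recall `β_{j+1} = v_j β_j - β_{j-1}`. -/

def coordsV5 : Finset (Multiset (ℤ × ℤ)) :=
  {{(0, 4)}, {(0, 3), (0, 1)}, {(0, 2), (0, 2)}, {(0, 2), (0, 1), (0, 1)},
    {(0, 1), (0, 1), (0, 1), (0, 1)}}

def coordsV4 : Finset (Multiset (ℤ × ℤ)) := insert {(1, 0), (-1, 4)} coordsV5

def coordsV3 : Finset (Multiset (ℤ × ℤ)) :=
  coordsV5 ∪ {{(1, 0), (0, 1), (-1, 3)}, {(1, 1), (-1, 3)}, {(1, 0), (-1, 4)}}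

def coordsV2 : Finset (Multiset (ℤ × ℤ)) :=
  coordsV5 ∪ {{(1, 0), (-1, 2), (0, 1), (0, 1)}, {(1, 1), (-1, 2), (0, 1)},
    {(-1, 3), (1, 0), (0, 1)}, {(0, 2), (1, 0), (-1, 2)}, {(1, 1), (-1, 3)}, {(-1, 4), (1, 0)},
    {(1, 2), (-1, 2)}, {(1, 0), (1, 0), (-1, 2), (-1, 2)}, {(2, 0), (-1, 2), (-1, 2)},
    {(-2, 4), (1, 0), (1, 0)}, {(2, 0), (-2, 4)}}

lemma map_mem_coordsV5 {tn : Multiset ℕ} (hpos : ∀ n ∈ tn, 0 < n) (hsum : tn.sum = 4) :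
    tn.map (fun n : ℕ => ((0 : ℤ), (n : ℤ))) ∈ coordsV5 := by
  have h : ∀ u ∈ smallPartitions, u.sum = 4 →
      u.map (fun n : ℕ => ((0 : ℤ), (n : ℤ))) ∈ coordsV5 := by
    decide
  exact h tn (mem_smallPartitions hpos hsum.le) hsum

lemma coordsV5_posCoord (V : ℤ) : ∀ T ∈ coordsV5, ∀ p ∈ T, PosCoord V p := by
  have h : ∀ T ∈ coordsV5, ∀ p ∈ T, 0 ≤ p.1 ∧ 0 ≤ p.2 ∧ 0 < p.1 + p.2 := by decide
  exact fun T hT p hp => Or.inl (h T hT p hp)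

section Counting
variable {D : ℕ} {β : ℤ → OK} {v : ℤ → ℤ}

lemma BetaSeq.map_coordHom_mem_tpPartitions (hβ : BetaSeq D β v) (j : ℤ)
    {T : Multiset (ℤ × ℤ)} (hsum : T.sum = (0, 4)) (hpos : ∀ p ∈ T, PosCoord (v j) p) :
    T.map (coordHom β j) ∈ tpPartitions D ((4 : ℤ) • β j) :=
  ⟨Multiset.forall_mem_map_iff.2 fun p hp => hβ.totPos_coordHom j (hpos p hp), by
    rw [← map_multiset_sum, hsum, coordHom_apply, zero_smul, zero_add]⟩

lemma BetaSeq.card_le_pK (hβ : BetaSeq D β v) (hD : 1 ≤ D) (j : ℤ)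
    (F : Finset (Multiset (ℤ × ℤ))) (hsum : ∀ T ∈ F, T.sum = (0, 4))
    (hpos : ∀ T ∈ F, ∀ p ∈ T, PosCoord (v j) p) : F.card ≤ pK D ((4 : ℤ) • β j) := by
  rw [pK_eq_ncard, ← Set.ncard_coe_finset, ← Set.ncard_image_of_injective (F : Set _)
    (Multiset.map_injective (hβ.coordHom_injective j))]
  refine Set.ncard_le_ncard ?_ (tpPartitions_finite hD _)
  rintro _ ⟨T, hT, rfl⟩
  exact hβ.map_coordHom_mem_tpPartitions j (hsum T hT) (hpos T hT)

lemma BetaSeq.pK_eq_card (hβ : BetaSeq D β v) (j : ℤ)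
    (F : Finset (Multiset (ℤ × ℤ))) (hsum : ∀ T ∈ F, T.sum = (0, 4))
    (hpos : ∀ T ∈ F, ∀ p ∈ T, PosCoord (v j) p)
    (hcover : ∀ s ∈ tpPartitions D ((4 : ℤ) • β j),
      ∃ T ∈ F, T.map (coordHom β j) = s) :
    pK D ((4 : ℤ) • β j) = F.card := by
  rw [pK_eq_ncard, ← Set.ncard_coe_finset, ← Set.ncard_image_of_injective (F : Set _)
    (Multiset.map_injective (hβ.coordHom_injective j))]
  congr 1
  refine Set.Subset.antisymm hcover ?_
  rintro _ ⟨T, hT, rfl⟩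
  exact hβ.map_coordHom_mem_tpPartitions j (hsum T hT) (hpos T hT)

lemma BetaSeq.exists_coordsV5_of_four_le (hβ : BetaSeq D β v) {j : ℤ} (hv : 4 ≤ v j)
    {s : Multiset OK} (hs : s ∈ tpPartitions D ((4 : ℤ) • β j)) :
    (∃ T ∈ coordsV5, T.map (coordHom β j) = s) ∨
      (v j = 4 ∧ ({(1, 0), (-1, 4)} : Multiset (ℤ × ℤ)).map (coordHom β j) = s) := by
  rcases hβ.tpPartition_of_four_le hv hs with ⟨tn, hpos, hsum, rfl⟩ | ⟨hv4, rfl⟩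
  · refine Or.inl ⟨_, map_mem_coordsV5 hpos hsum, ?_⟩
    rw [Multiset.map_map]
    exact Multiset.map_congr rfl fun n _ => by simp [coordHom_apply]
  · refine Or.inr ⟨hv4, ?_⟩
    have hsucc : β (j + 1) = (4 : ℤ) • β j - β (j - 1) := by
      rw [← hv4, hβ.rel, add_sub_cancel_left]
    simp only [Multiset.insert_eq_cons, Multiset.map_cons, Multiset.map_singleton, coordHom_apply,
      hsucc]
    congr 2 <;> module

end Counting

theorem stmt15_general (D : ℕ) (hD : 2 ≤ D)
    (β : ℤ → OK) (v : ℤ → ℤ) (hβ : BetaSeq D β v)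
    (j : ℤ) (α : OK) (hα : α = (4 : ℤ) • β j) :
    (5 ≤ v j → pK D α = 5) ∧
    (v j = 4 → pK D α = 6) ∧
    (v j = 3 → 8 ≤ pK D α) ∧
    (v j = 2 → 16 ≤ pK D α) := by
  subst hα
  refine ⟨fun hv => ?_, fun hv => ?_, fun hv => ?_, fun hv => ?_⟩
  · refine (hβ.pK_eq_card j coordsV5 (by decide) (coordsV5_posCoord _) fun s hs => ?_).trans
      (by decide)
    rcases hβ.exists_coordsV5_of_four_le (by omega) hs with h | ⟨hv4, -⟩
    exacts [h, by omega]
  · refine (hβ.pK_eq_card j coordsV4 (by decide) (by rw [hv]; decide) fun s hs => ?_).trans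
      (by decide)
    rcases hβ.exists_coordsV5_of_four_le hv.ge hs with ⟨T, hT, rfl⟩ | ⟨-, rfl⟩
    exacts [⟨T, Finset.mem_insert_of_mem hT, rfl⟩, ⟨_, Finset.mem_insert_self _ _, rfl⟩]
  · exact (by decide : 8 = coordsV3.card).trans_le
      (hβ.card_le_pK (by omega) j coordsV3 (by decide) (by rw [hv]; decide))
  · exact (by decide : 16 = coordsV2.card).trans_le
      (hβ.card_le_pK (by omega) j coordsV2 (by decide) (by rw [hv]; decide))

/-- the number of partitions of `4β_j`. -/
theorem stmt15 (D : ℕ) (hD : 2 ≤ D) (hsq : Squarefree D)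
    (β : ℤ → OK) (v : ℤ → ℤ) (hβ : BetaSeq D β v)
    (j : ℤ) (α : OK) (hα : α = (4 : ℤ) • β j) :
    (5 ≤ v j → pK D α = 5) ∧
    (v j = 4 → pK D α = 6) ∧
    (v j = 3 → 8 ≤ pK D α) ∧
    (v j = 2 → 16 ≤ pK D α) :=
  stmt15_general D hD β v hβ j α hα
end
end

section
/- Let K = ℚ(√D) with D ≥ 2 squarefree and (β_j)_{j∈ℤ} the ordered sequence of indecomposables with v_jβ_j = β_{j-1} + β_{j+1}, and let m ≥ 1. If α = eβ_j + fβ_{j+1} with e ≥ mv_j (and f ≥ 0), then α has at least m + 1 distinct partitions into indecomposable parts; explicitly, α = kβ_{j-1} + (e - kv_j)β_j + (k + f)β_{j+1} for each k ∈ {0, 1, ..., m}. -/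
noncomputable section

section Aux

lemma emb1_zero (D : ℕ) : emb1 D (0 : OK) = 0 := by simp [emb1]

lemma emb1_sum (D : ℕ) (s : Multiset OK) : emb1 D s.sum = (s.map (emb1 D)).sum := by
  induction s using Multiset.induction with
  | empty => simp [emb1]
  | cons a t ih => simp [Multiset.sum_cons, emb1_add, ih]

lemma emb2_sum (D : ℕ) (s : Multiset OK) : emb2 D s.sum = (s.map (emb2 D)).sum := by
  induction s using Multiset.induction with
  | empty => simp [emb2]
  | cons a t ih => simp [Multiset.sum_cons, emb2_add, ih]

lemma sqrtD_sq (D : ℕ) : Real.sqrt D ^ 2 = D := Real.sq_sqrt (by positivity)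

/-- The trace and norm of `ω_D` are integers. -/
lemma omega_trace (D : ℕ) :
    omegaD D + omegaD' D = (if D % 4 = 1 then (1:ℝ) else 0) := by
  unfold omegaD omegaD'; split <;> ring

lemma omega_norm (D : ℕ) : ∃ c : ℤ, omegaD D * omegaD' D = (c : ℝ) := by
  have hs := sqrtD_sq D
  by_cases h : D % 4 = 1
  · obtain ⟨t, ht⟩ : ∃ t, D = 4 * t + 1 := ⟨D / 4, by omega⟩
    refine ⟨-(t : ℤ), ?_⟩
    have hD : (D : ℝ) = 4 * t + 1 := by exact_mod_cast congrArg (Nat.cast : ℕ → ℝ) ht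
    simp only [omegaD, omegaD', if_pos h]
    push_cast
    nlinarith [hs, hD]
  · refine ⟨-(D : ℤ), ?_⟩
    simp only [omegaD, omegaD', if_neg h]
    push_cast
    nlinarith [hs]

lemma Nm_exists_int (D : ℕ) (x : OK) : ∃ n : ℤ, Nm D x = (n : ℝ) := by
  obtain ⟨c, hc⟩ := omega_norm D
  by_cases h : D % 4 = 1
  · refine ⟨x.1 ^ 2 + x.1 * x.2 + c * x.2 ^ 2, ?_⟩
    have ht := omega_trace D
    rw [if_pos h] at ht
    unfold Nm emb1 emb2
    push_cast
    linear_combination ((x.1 : ℝ) * (x.2 : ℝ)) * ht + ((x.2 : ℝ) ^ 2) * hc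
  · refine ⟨x.1 ^ 2 + c * x.2 ^ 2, ?_⟩
    have ht := omega_trace D
    rw [if_neg h] at ht
    unfold Nm emb1 emb2
    push_cast
    linear_combination ((x.1 : ℝ) * (x.2 : ℝ)) * ht + ((x.2 : ℝ) ^ 2) * hc

lemma Nm_ge_one (D : ℕ) (x : OK) (hx : TotPos D x) : 1 ≤ Nm D x := by
  obtain ⟨n, hn⟩ := Nm_exists_int D x
  have hpos : 0 < Nm D x := mul_pos hx.1 hx.2
  rw [hn] at hpos ⊢
  exact_mod_cast hpos

lemma sqrtD_ge_one (D : ℕ) (hD : 2 ≤ D) : 1 ≤ Real.sqrt D := by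
  have h1 : (1 : ℝ) ≤ D := by exact_mod_cast Nat.one_le_of_lt hD
  exact Real.one_le_sqrt.mpr h1

lemma omega_pos (D : ℕ) (hD : 2 ≤ D) : 0 < omegaD D := by
  have h1 := sqrtD_ge_one D hD
  unfold omegaD; split <;> linarith

lemma omega_le_D (D : ℕ) (hD : 2 ≤ D) : omegaD D ≤ D := by
  have h1 := sqrtD_ge_one D hD
  have hs := sqrtD_sq D
  have hD' : (2 : ℝ) ≤ D := by exact_mod_cast hD
  have hle : Real.sqrt D ≤ D := by nlinarith
  unfold omegaD; split <;> linarith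

lemma omega_sub_ge_one (D : ℕ) (hD : 2 ≤ D) : 1 ≤ omegaD D - omegaD' D := by
  have h1 := sqrtD_ge_one D hD
  unfold omegaD omegaD'; split <;> [skip; skip] <;> linarith

/-- Finiteness of multisets with bounded support and cardinality. -/
lemma finite_multisets {γ : Type*} [DecidableEq γ] (P : Finset γ) (N : ℕ) :
    {s : Multiset γ | (∀ x ∈ s, x ∈ P) ∧ Multiset.card s ≤ N}.Finite := by
  rw [← Set.finite_coe_iff]
  apply Finite.of_injective
    (fun s : {s : Multiset γ | (∀ x ∈ s, x ∈ P) ∧ Multiset.card s ≤ N} =>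
      (fun p : P => (⟨Multiset.count p.1 s.1,
        Nat.lt_succ_of_le ((Multiset.count_le_card _ _).trans s.2.2)⟩ : Fin (N + 1))))
  intro s t h
  ext1
  ext a
  by_cases ha : a ∈ P
  · have := congrFun h ⟨a, ha⟩
    exact congrArg Fin.val this
  · rw [Multiset.count_eq_zero_of_notMem (fun hm => ha (s.2.1 a hm)),
      Multiset.count_eq_zero_of_notMem (fun hm => ha (t.2.1 a hm))]

end Aux

/-- if `e ≥ m·v_j` then `α = eβ_j + fβ_{j+1}` has at least `m+1`
partitions into indecomposable parts, via the explicit rewritings. -/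
theorem stmt19 (D : ℕ) (hD : 2 ≤ D) (hsq : Squarefree D)
    (β : ℤ → OK) (v : ℤ → ℤ) (hβ : BetaSeq D β v)
    (m : ℕ) (hm : 1 ≤ m)
    (j e f : ℤ) (hf : 0 ≤ f) (he : (m : ℤ) * v j ≤ e)
    (α : OK) (hα : α = e • β j + f • β (j + 1)) :
    (∀ k : ℤ, 0 ≤ k → k ≤ (m : ℤ) →
      α = k • β (j - 1) + (e - k * v j) • β j + (k + f) • β (j + 1)) ∧
    m + 1 ≤ pKI D α := by
  classical
  have hvj : 2 ≤ v j := hβ.v_two_le j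
  -- Part 1: the rewriting identity
  have hrelid : ∀ k : ℤ,
      α = k • β (j - 1) + (e - k * v j) • β j + (k + f) • β (j + 1) := by
    intro k
    have hrel := hβ.rel j
    have key : k • β (j - 1) + k • β (j + 1) = (k * v j) • β j := by
      rw [← smul_add, ← hrel, smul_smul]
    have expand : k • β (j - 1) + (e - k * v j) • β j + (k + f) • β (j + 1)
        = (k • β (j - 1) + k • β (j + 1)) + ((e - k * v j) • β j + f • β (j + 1)) := by
      rw [add_smul]; abel
    rw [hα, expand, key, show (k * v j) • β j + ((e - k * v j) • β j + f • β (j + 1))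
        = (k * v j + (e - k * v j)) • β j + f • β (j + 1) by rw [add_smul]; abel,
      show k * v j + (e - k * v j) = e by ring]
  refine ⟨fun k _ _ => hrelid k, ?_⟩
  -- Setup
  have hinj : Function.Injective β := fun a b h =>
    hβ.mono.injective (congrArg (emb1 D) h)
  have hβjm := (hβ.indec (j - 1)).1
  have hβj := (hβ.indec j).1
  have hβj1 := (hβ.indec (j + 1)).1
  have he2 : 2 ≤ e := le_trans (by nlinarith [show (1:ℤ) ≤ (m:ℤ) from by exact_mod_cast hm]) he
  set A1 : ℝ := emb1 D α with hA1def
  set A2 : ℝ := emb2 D α with hA2def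
  have hA1 : 0 < A1 := by
    rw [hA1def, hα, emb1_add, emb1_zsmul, emb1_zsmul]
    have := hβj.1; have := hβj1.1
    have hf' : (0:ℝ) ≤ (f:ℝ) := by exact_mod_cast hf
    have he' : (2:ℝ) ≤ (e:ℝ) := by exact_mod_cast he2
    nlinarith
  have hA2 : 0 < A2 := by
    rw [hA2def, hα, emb2_add, emb2_zsmul, emb2_zsmul]
    have := hβj.2; have := hβj1.2
    have hf' : (0:ℝ) ≤ (f:ℝ) := by exact_mod_cast hf
    have he' : (2:ℝ) ≤ (e:ℝ) := by exact_mod_cast he2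
    nlinarith
  set S : Set (Multiset OK) :=
    {s : Multiset OK | (∀ x ∈ s, Indec D x) ∧ s.sum = α} with hSdef
  -- bounds on elements of partitions
  have hsum1_nonneg : ∀ t : Multiset OK, (∀ y ∈ t, TotPos D y) → 0 ≤ emb1 D t.sum := by
    intro t ht
    rw [emb1_sum]
    refine Multiset.sum_nonneg ?_
    intro r hr
    obtain ⟨y, hy, rfl⟩ := Multiset.mem_map.mp hr
    exact (ht y hy).1.le
  have hsum2_nonneg : ∀ t : Multiset OK, (∀ y ∈ t, TotPos D y) → 0 ≤ emb2 D t.sum := by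
    intro t ht
    rw [emb2_sum]
    refine Multiset.sum_nonneg ?_
    intro r hr
    obtain ⟨y, hy, rfl⟩ := Multiset.mem_map.mp hr
    exact (ht y hy).2.le
  have hbound : ∀ s ∈ S, ∀ x ∈ s, TotPos D x ∧ emb1 D x ≤ A1 ∧ emb2 D x ≤ A2 := by
    intro s hs x hx
    obtain ⟨t, rfl⟩ := Multiset.exists_cons_of_mem hx
    have hall := hs.1
    have hxp : TotPos D x := (hall x (Multiset.mem_cons_self x t)).1
    have htp : ∀ y ∈ t, TotPos D y := fun y hy =>
      (hall y (Multiset.mem_cons_of_mem hy)).1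
    have hsum : x + t.sum = α := by rw [← Multiset.sum_cons]; exact hs.2
    refine ⟨hxp, ?_, ?_⟩
    · have := hsum1_nonneg t htp
      have h1 : emb1 D (x + t.sum) = A1 := by rw [hsum]
      rw [emb1_add] at h1; linarith
    · have := hsum2_nonneg t htp
      have h2 : emb2 D (x + t.sum) = A2 := by rw [hsum]
      rw [emb2_add] at h2; linarith
  -- the finite box and cardinality bound
  set M : ℤ := ⌈A1 + (A1 + A2) * D⌉ with hMdef
  set P : Finset OK := Finset.Icc (-M) M ×ˢ Finset.Icc (-M) M with hPdef
  set N : ℕ := ⌊A1 * A2⌋₊ with hNdef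
  have hSsub : S ⊆ {s : Multiset OK | (∀ x ∈ s, x ∈ P) ∧ Multiset.card s ≤ N} := by
    intro s hs
    have hD' : (2:ℝ) ≤ (D:ℝ) := by exact_mod_cast hD
    constructor
    · intro x hx
      obtain ⟨hxp, hx1, hx2⟩ := hbound s hs x hx
      have hω := omega_pos D hD
      have hωD := omega_le_D D hD
      have hωs := omega_sub_ge_one D hD
      have hx1p := hxp.1
      have hx2p := hxp.2
      -- coordinate bounds
      have hdiff : emb1 D x - emb2 D x = (x.2 : ℝ) * (omegaD D - omegaD' D) := by
        unfold emb1 emb2; ring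
      have habs2 : |(x.2 : ℝ)| ≤ A1 + A2 := by
        have h1 : |(x.2 : ℝ)| * 1 ≤ |(x.2 : ℝ)| * (omegaD D - omegaD' D) :=
          mul_le_mul_of_nonneg_left hωs (abs_nonneg _)
        have h2 : |(x.2 : ℝ)| * (omegaD D - omegaD' D) = |emb1 D x - emb2 D x| := by
          rw [hdiff, abs_mul, abs_of_nonneg (by linarith : (0:ℝ) ≤ omegaD D - omegaD' D)]
        have h3 : |emb1 D x - emb2 D x| ≤ A1 + A2 := by
          rw [abs_le]; constructor <;> linarith
        calc |(x.2 : ℝ)| = |(x.2 : ℝ)| * 1 := by ring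
          _ ≤ A1 + A2 := by rw [h2] at h1; linarith
      have habs1 : |(x.1 : ℝ)| ≤ A1 + (A1 + A2) * D := by
        have hx1eq : (x.1 : ℝ) = emb1 D x - (x.2 : ℝ) * omegaD D := by
          unfold emb1; ring
        have h4 : |(x.2 : ℝ) * omegaD D| ≤ (A1 + A2) * D := by
          rw [abs_mul, abs_of_nonneg hω.le]
          have := abs_nonneg (x.2 : ℝ)
          nlinarith
        rw [hx1eq]
        have := abs_sub (emb1 D x) ((x.2 : ℝ) * omegaD D)
        have h5 : |emb1 D x| ≤ A1 := by rw [abs_of_nonneg hx1p.le]; exact hx1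
        calc |emb1 D x - (x.2:ℝ) * omegaD D| ≤ |emb1 D x| + |(x.2:ℝ) * omegaD D| :=
              abs_sub _ _
          _ ≤ A1 + (A1 + A2) * D := by linarith
      have hR2 : A1 + A2 ≤ A1 + (A1 + A2) * D := by nlinarith
      have hMle : A1 + (A1 + A2) * D ≤ (M : ℝ) := Int.le_ceil _
      have hb1 : |(x.1 : ℝ)| ≤ (M : ℝ) := habs1.trans hMle
      have hb2 : |(x.2 : ℝ)| ≤ (M : ℝ) := (habs2.trans hR2).trans hMle
      rw [abs_le] at hb1 hb2
      rw [hPdef, Finset.mem_product, Finset.mem_Icc, Finset.mem_Icc]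
      refine ⟨⟨?_, ?_⟩, ?_, ?_⟩
      · exact_mod_cast hb1.1
      · exact_mod_cast hb1.2
      · exact_mod_cast hb2.1
      · exact_mod_cast hb2.2
    · -- cardinality bound
      have hlow : ∀ r ∈ s.map (emb1 D), A2⁻¹ ≤ r := by
        intro r hr
        obtain ⟨x, hx, rfl⟩ := Multiset.mem_map.mp hr
        obtain ⟨hxp, hx1, hx2⟩ := hbound s hs x hx
        have hNm := Nm_ge_one D x hxp
        unfold Nm at hNm
        rw [show A2⁻¹ = 1 / A2 from (one_div A2).symm, div_le_iff₀ hA2]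
        nlinarith [hxp.1, hxp.2]
      have hcard := Multiset.card_nsmul_le_sum hlow
      rw [Multiset.card_map] at hcard
      have hsumeq : (s.map (emb1 D)).sum = A1 := by rw [← emb1_sum, hs.2]
      rw [hsumeq, nsmul_eq_mul] at hcard
      have : (Multiset.card s : ℝ) ≤ A1 * A2 := by
        have hpos : (0:ℝ) < A2⁻¹ := by positivity
        calc (Multiset.card s : ℝ) = (Multiset.card s : ℝ) * A2⁻¹ * A2 := by
              field_simp
          _ ≤ A1 * A2 := by nlinarith
      exact Nat.le_floor this
  have hSfin : S.Finite := (finite_multisets P N).subset hSsub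
  -- the m+1 explicit partitions
  set msk : ℕ → Multiset OK := fun k =>
    Multiset.replicate k (β (j - 1)) +
    Multiset.replicate (e - (k : ℤ) * v j).toNat (β j) +
    Multiset.replicate (k + f.toNat) (β (j + 1)) with hmskdef
  have hmskS : ∀ k : ℕ, k ≤ m → msk k ∈ S := by
    intro k hk
    constructor
    · intro x hx
      rw [hmskdef] at hx
      simp only [Multiset.mem_add, Multiset.mem_replicate] at hx
      rcases hx with (⟨_, rfl⟩ | ⟨_, rfl⟩) | ⟨_, rfl⟩
      · exact hβ.indec (j - 1)
      · exact hβ.indec j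
      · exact hβ.indec (j + 1)
    · have hkm : (k : ℤ) * v j ≤ e := by
        have h1 : (k : ℤ) ≤ (m : ℤ) := by exact_mod_cast hk
        have h2 : (k : ℤ) * v j ≤ (m : ℤ) * v j :=
          mul_le_mul_of_nonneg_right h1 (by linarith)
        linarith
      show Multiset.sum _ = α
      rw [hmskdef]
      simp only [Multiset.sum_add, Multiset.sum_replicate]
      rw [hrelid (k : ℤ)]
      have c1 : (k : ℕ) • β (j - 1) = (k : ℤ) • β (j - 1) := (natCast_zsmul _ _).symm
      have c2 : (e - (k : ℤ) * v j).toNat • β j = (e - (k : ℤ) * v j) • β j := by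
        rw [← natCast_zsmul, Int.toNat_of_nonneg (by linarith)]
      have c3 : (k + f.toNat) • β (j + 1) = ((k : ℤ) + f) • β (j + 1) := by
        rw [← natCast_zsmul]
        congr 1
        push_cast [Int.toNat_of_nonneg hf]
        ring
      rw [c1, c2, c3]
  -- distinctness
  have hne1 : β (j - 1) ≠ β j := fun h => by have := hinj h; omega
  have hne2 : β (j - 1) ≠ β (j + 1) := fun h => by have := hinj h; omega
  have hcount : ∀ k : ℕ, Multiset.count (β (j - 1)) (msk k) = k := by
    intro k
    rw [hmskdef]
    rw [Multiset.count_add, Multiset.count_add, Multiset.count_replicate,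
      Multiset.count_replicate, Multiset.count_replicate,
      if_pos rfl, if_neg (Ne.symm hne1), if_neg (Ne.symm hne2)]
    omega
  have hmskinj : Function.Injective msk := by
    intro a b h
    have := hcount a
    rw [h, hcount b] at this
    omega
  set F : Finset (Multiset OK) := (Finset.range (m + 1)).image msk with hFdef
  have hFcard : F.card = m + 1 := by
    rw [hFdef, Finset.card_image_of_injective _ hmskinj, Finset.card_range]
  have hFS : ↑F ⊆ S := by
    intro s hs
    rw [hFdef] at hs
    simp only [Finset.coe_image, Set.mem_image, Finset.mem_coe,
      Finset.mem_range] at hs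
    obtain ⟨k, hk, rfl⟩ := hs
    exact hmskS k (Nat.lt_succ_iff.mp hk)
  show m + 1 ≤ S.ncard
  calc m + 1 = F.card := hFcard.symm
    _ = (↑F : Set (Multiset OK)).ncard := (Set.ncard_coe_finset F).symm
    _ ≤ S.ncard := Set.ncard_le_ncard hFS hSfin
end
end
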